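/- Let g be a finite-dimensional real Lie algebra, V a finite-dimensional real inner product space with orthonormal basis e₁,…,eₙ, and r : g → End(V) a Lie algebra representation by skew-adjoint operators. Then the ℝ-subalgebra of U(g) ⊗ Cl(V) generated by the set {ι_U(X) ⊗ 1 + 1 ⊗ (r X)~ : X ∈ g} ∪ {1 ⊗ ι(v) : v ∈ V} is all of U(g) ⊗ Cl(V). -/

import Mathlib

/-!
The generators `1 ⊗ ι(v)` already generate `1 ⊗ Cl(V)`, which therefore contains every
`1 ⊗ (r X)~`. Subtracting these from the diagonal generators leaves `ι_U(X) ⊗ 1`, which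
generate `U(g) ⊗ 1`; and `a ⊗ c = (a ⊗ 1)(1 ⊗ c)`.
-/

open scoped RealInnerProductSpace TensorProduct

attribute [local instance] LieRing.ofAssociativeRing

/-- The quantization `Ã = −(1/4) ∑ᵢ ι(eᵢ)·ι(A eᵢ)` of an endomorphism `A` of a real
inner product space `V` inside the Clifford algebra of `V`. -/
noncomputable def quantize {V : Type*} [NormedAddCommGroup V] [InnerProductSpace ℝ V]
    {n : ℕ} (b : OrthonormalBasis (Fin n) ℝ V) (Q : QuadraticForm ℝ V)
    (A : V →ₗ[ℝ] V) : CliffordAlgebra Q :=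
  -((1 : ℝ)/4) • ∑ i, CliffordAlgebra.ι Q (b i) * CliffordAlgebra.ι Q (A (b i))

theorem UniversalEnvelopingAlgebra.adjoin_range_ι (R L : Type*) [CommRing R] [LieRing L]
    [LieAlgebra R L] :
    Algebra.adjoin R (Set.range (ι R : L → UniversalEnvelopingAlgebra R L)) = ⊤ := by
  have hsurj : (mkAlgHom R L).range = ⊤ := RingCon.range_mkₐ
  rw [← hsurj, ← Algebra.map_top, ← TensorAlgebra.adjoin_range_ι, AlgHom.map_adjoin,
    ← Set.range_comp]
  rfl

theorem AlgHom.range_le_of_adjoin_eq_top {R A C : Type*} [CommSemiring R] [Semiring A]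
    [Semiring C] [Algebra R A] [Algebra R C] (f : A →ₐ[R] C) {s : Set A}
    (hs : Algebra.adjoin R s = ⊤) {S : Subalgebra R C} (h : ∀ x ∈ s, f x ∈ S) :
    f.range ≤ S := by
  rw [← Algebra.map_top, ← hs, AlgHom.map_adjoin]
  exact Algebra.adjoin_le (Set.image_subset_iff.2 h)

namespace Algebra.TensorProduct

theorem eq_top_of_range_includeLeft_le_of_range_includeRight_le {R A B : Type*}
    [CommSemiring R] [Semiring A] [Algebra R A] [Semiring B] [Algebra R B]
    {S : Subalgebra R (A ⊗[R] B)} (hA : (includeLeft : A →ₐ[R] A ⊗[R] B).range ≤ S)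
    (hB : (includeRight : B →ₐ[R] A ⊗[R] B).range ≤ S) : S = ⊤ := by
  refine Algebra.eq_top_iff.2 fun x => ?_
  induction x using TensorProduct.induction_on with
  | zero => exact zero_mem S
  | tmul a b =>
    rw [← mul_one a, ← one_mul b, ← tmul_mul_tmul]
    exact mul_mem (hA ⟨a, rfl⟩) (hB ⟨b, rfl⟩)
  | add x y hx hy => exact add_mem hx hy

end Algebra.TensorProduct

theorem diagonal_and_clifford_generate_general
    {g : Type*} [LieRing g] [LieAlgebra ℝ g]
    {V : Type*} [NormedAddCommGroup V] [InnerProductSpace ℝ V]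
    {n : ℕ} (b : OrthonormalBasis (Fin n) ℝ V)
    (Q : QuadraticForm ℝ V)
    (r : g →ₗ⁅ℝ⁆ Module.End ℝ V) :
    Algebra.adjoin ℝ
      ((Set.range fun X : g =>
          (UniversalEnvelopingAlgebra.ι ℝ X) ⊗ₜ[ℝ] (1 : CliffordAlgebra Q)
            + 1 ⊗ₜ[ℝ] quantize b Q (r X)) ∪
        (Set.range fun v : V =>
          (1 : UniversalEnvelopingAlgebra ℝ g) ⊗ₜ[ℝ] CliffordAlgebra.ι Q v)) = ⊤ := by
  open Algebra.TensorProduct in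
  set S : Subalgebra ℝ (UniversalEnvelopingAlgebra ℝ g ⊗[ℝ] CliffordAlgebra Q) :=
    Algebra.adjoin ℝ _
  have hCl : (includeRight : CliffordAlgebra Q →ₐ[ℝ] _).range ≤ S :=
    includeRight.range_le_of_adjoin_eq_top CliffordAlgebra.adjoin_range_ι <| by
      rintro _ ⟨v, rfl⟩
      exact Algebra.subset_adjoin (.inr ⟨v, rfl⟩)
  have hU : (includeLeft : UniversalEnvelopingAlgebra ℝ g →ₐ[ℝ] _).range ≤ S :=
    includeLeft.range_le_of_adjoin_eq_top (UniversalEnvelopingAlgebra.adjoin_range_ι ℝ g) <| by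
      rintro _ ⟨X, rfl⟩
      have hdiag : _ ∈ S := Algebra.subset_adjoin (.inl ⟨X, rfl⟩)
      simpa using sub_mem hdiag (hCl ⟨quantize b Q (r X), rfl⟩)
  exact eq_top_of_range_includeLeft_le_of_range_includeRight_le hU hCl

/-- For a representation `r` of a finite-dimensional real Lie algebra `g` by skew-adjoint
operators on a finite-dimensional real inner product space `V`, the subalgebra of
`U(g) ⊗ Cl(V)` generated by the elements `ι_U(X) ⊗ 1 + 1 ⊗ (r X)~` for `X ∈ g` together
with the elements `1 ⊗ ι(v)` for `v ∈ V` is the whole algebra. -/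
theorem diagonal_and_clifford_generate
    {g : Type*} [LieRing g] [LieAlgebra ℝ g] [Module.Finite ℝ g]
    {V : Type*} [NormedAddCommGroup V] [InnerProductSpace ℝ V] [FiniteDimensional ℝ V]
    {n : ℕ} (b : OrthonormalBasis (Fin n) ℝ V)
    (Q : QuadraticForm ℝ V) (hQ : ∀ v : V, Q v = -⟪v, v⟫)
    (r : g →ₗ⁅ℝ⁆ Module.End ℝ V)
    (hr : ∀ (X : g) (v w : V), ⟪r X v, w⟫ = -⟪v, r X w⟫) :
    Algebra.adjoin ℝ
      ((Set.range fun X : g =>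
          (UniversalEnvelopingAlgebra.ι ℝ X) ⊗ₜ[ℝ] (1 : CliffordAlgebra Q)
            + 1 ⊗ₜ[ℝ] quantize b Q (r X)) ∪
        (Set.range fun v : V =>
          (1 : UniversalEnvelopingAlgebra ℝ g) ⊗ₜ[ℝ] CliffordAlgebra.ι Q v)) = ⊤ :=
  diagonal_and_clifford_generate_general b Q r
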